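/- Let T be a finite tree with a degree-2 internal vertex ∂ adjacent to a leaf x and another vertex z, with edge weights α(x,∂), α(∂,z) ∈ (0,d) satisfying α(x,∂)+α(∂,z) > d. Let T' be T with ∂ removed and the two edges merged into {x,z} with weight α(x,∂)+α(∂,z)−d. Then for any labelling φ : V(T)\{∂} → ℤ^d, ∑_{y∈ℤ^d} p_{φ[∂↦y]}(T) ≤ C p_φ(T'), where p is the edge-weight product p_ψ(S) = ∏_{(u,v)∈E(S)} 1/(1+‖ψ(u)−ψ(v)‖^{α(u,v)}) and C depends only on d and the weights. -/

import Mathlib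

/-- Euclidean norm of a point of `ℤ^d`. -/
noncomputable def znorm {d : ℕ} (x : Fin d → ℤ) : ℝ :=
  Real.sqrt (∑ i, ((x i : ℝ)) ^ 2)

/-- Weight of a (oriented) edge set `E` with edge exponents `α` and vertex
labelling `ψ` into `ℤ^d`. -/
noncomputable def edgesWeight {V : Type*} {d : ℕ} (E : Finset (V × V))
    (α : V × V → ℝ) (ψ : V → (Fin d → ℤ)) : ℝ :=
  ∏ e ∈ E, 1 / (1 + znorm (ψ e.1 - ψ e.2) ^ α e)

/-!
Since `E` lists every edge of `G` exactly once, the two edges at the degree-two vertex `pv` are the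
only factors that depend on the summed label `y`. The sum therefore factors as the weight of the
remaining edges times the lattice convolution `∑_y (1 + ‖a - y‖^A)⁻¹ (1 + ‖y - b‖^B)⁻¹`; as every
edge weight is at most `1`, inserting the merged edge costs at most its own factor.

For the convolution, replace `(1 + t^A)⁻¹` by the comparable `(1 + t)^(-A)` and split the sum
according to whether `y` is closer to `a` or to `b`. If `y` is closer to `a`, then
`‖b - y‖ ≥ ‖a - b‖ / 2`. On the ball `‖a - y‖ ≤ ‖a - b‖ / 2` the factor at `b` is at most
`(1 + ‖a - b‖ / 2)^(-B)`, and the ball sum of `(1 + ‖a - y‖)^(-A)` is `O((1 + ‖a - b‖)^(d-A))`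
because `A < d`. Off the ball the summand is at most `(1 + ‖a - y‖)^(-(A+B))`, whose tail sum is
`O((1 + ‖a - b‖)^(d-A-B))` because `A + B > d`. Both lattice sums are estimated on the dyadic
shells `2^j ≤ 1 + ‖u‖ < 1 + 2^(j+1)`, which contain at most `8^d 2^(jd)` points each.
-/

open Finset

lemma sum_pow_le_of_lt_one {r K : ℝ} (hr0 : 0 ≤ r) (hr1 : r < 1) (hK : 0 ≤ K) {T : Finset ℕ}
    (hT : ∀ j ∈ T, r ^ j ≤ K) : ∑ j ∈ T, r ^ j ≤ K / (1 - r) := by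
  have h1r : 0 < 1 - r := sub_pos.2 hr1
  rcases T.eq_empty_or_nonempty with rfl | hne
  · simpa using div_nonneg hK h1r.le
  calc ∑ j ∈ T, r ^ j ≤ ∑ j ∈ Ico (T.min' hne) (T.max' hne + 1), r ^ j :=
        sum_le_sum_of_subset_of_nonneg
          (fun j hj => mem_Ico.2 ⟨min'_le _ _ hj, Nat.lt_succ_of_le (le_max' _ _ hj)⟩)
          fun _ _ _ => pow_nonneg hr0 _
    _ ≤ r ^ T.min' hne / (1 - r) := geom_sum_Ico_le_of_lt_one hr0 hr1
    _ ≤ K / (1 - r) := by gcongr; exact hT _ (min'_mem _ _)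

lemma sum_pow_le_of_one_lt {q K : ℝ} (hq : 1 < q) (hK : 0 ≤ K) {T : Finset ℕ}
    (hT : ∀ j ∈ T, q ^ j ≤ K) : ∑ j ∈ T, q ^ j ≤ q / (q - 1) * K := by
  have hq1 : 0 < q - 1 := sub_pos.2 hq
  rcases T.eq_empty_or_nonempty with rfl | hne
  · simpa using mul_nonneg (div_nonneg (by linarith) hq1.le) hK
  calc ∑ j ∈ T, q ^ j ≤ ∑ j ∈ range (T.max' hne + 1), q ^ j :=
        sum_le_sum_of_subset_of_nonneg
          (fun j hj => mem_range.2 (Nat.lt_succ_of_le (le_max' _ _ hj)))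
          fun _ _ _ => pow_nonneg (by linarith) _
    _ = (q ^ (T.max' hne + 1) - 1) / (q - 1) := geom_sum_eq hq.ne' _
    _ ≤ q / (q - 1) * q ^ T.max' hne := by
        rw [pow_succ, div_mul_eq_mul_div, mul_comm q]
        gcongr
        linarith
    _ ≤ q / (q - 1) * K := by
        gcongr
        exact hT _ (max'_mem _ _)

lemma one_add_div_two_rpow_le {c t : ℝ} (hc : c ≤ 0) (ht : 0 ≤ t) :
    (1 + t / 2) ^ c ≤ 2 ^ (-c) * (1 + t) ^ c :=
  calc (1 + t / 2) ^ c = 2 ^ (-c) * (2 * (1 + t / 2)) ^ c := by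
        rw [Real.mul_rpow zero_le_two (by positivity), ← mul_assoc,
          ← Real.rpow_add two_pos, neg_add_cancel, Real.rpow_zero, one_mul]
    _ ≤ 2 ^ (-c) * (1 + t) ^ c := by
        refine mul_le_mul_of_nonneg_left ?_ (by positivity)
        exact Real.rpow_le_rpow_of_nonpos (by linarith) (by linarith) hc

lemma one_div_one_add_rpow_le {e t : ℝ} (he : 0 ≤ e) (ht : 0 ≤ t) :
    1 / (1 + t ^ e) ≤ 2 ^ e * (1 + t) ^ (-e) := by
  have hmax : (1 + t) ^ e ≤ 2 ^ e * (1 + t ^ e) := by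
    rcases le_total t 1 with h | h
    · calc (1 + t) ^ e ≤ 2 ^ e := by gcongr; linarith
        _ ≤ 2 ^ e * (1 + t ^ e) := le_mul_of_one_le_right (by positivity)
            (le_add_of_nonneg_right (by positivity))
    · calc (1 + t) ^ e ≤ (2 * t) ^ e := by gcongr; linarith
        _ ≤ 2 ^ e * (1 + t ^ e) := by
            rw [Real.mul_rpow zero_le_two ht]
            gcongr
            linarith
  rw [Real.rpow_neg (by positivity), ← div_eq_mul_inv,
    div_le_div_iff₀ (by positivity) (by positivity)]
  linarith

lemma rpow_neg_le_two_div_one_add_rpow {e t : ℝ} (he : 0 ≤ e) (ht : 0 ≤ t) :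
    (1 + t) ^ (-e) ≤ 2 / (1 + t ^ e) := by
  have h1 : t ^ e ≤ (1 + t) ^ e := by gcongr; linarith
  have h2 : 1 ≤ (1 + t) ^ e := Real.one_le_rpow (by linarith) he
  rw [Real.rpow_neg (by positivity), ← one_div, div_le_div_iff₀ (by positivity) (by positivity)]
  linarith

section LatticeSums

variable {d : ℕ}

lemma znorm_nonneg (x : Fin d → ℤ) : 0 ≤ znorm x := Real.sqrt_nonneg _

lemma znorm_sub_eq_dist (x y : Fin d → ℤ) :
    znorm (x - y) = dist (WithLp.toLp 2 fun i => (x i : ℝ) : EuclideanSpace ℝ (Fin d))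
      (WithLp.toLp 2 fun i => (y i : ℝ)) := by
  simp [znorm, EuclideanSpace.dist_eq, Real.dist_eq, sq_abs]

lemma znorm_sub_comm (x y : Fin d → ℤ) : znorm (x - y) = znorm (y - x) := by
  rw [znorm_sub_eq_dist, znorm_sub_eq_dist, dist_comm]

lemma znorm_sub_le (a b y : Fin d → ℤ) : znorm (a - b) ≤ znorm (a - y) + znorm (b - y) := by
  rw [znorm_sub_eq_dist, znorm_sub_eq_dist, znorm_sub_eq_dist]
  exact dist_triangle_right _ _ _

lemma abs_le_znorm (x : Fin d → ℤ) (i : Fin d) : |(x i : ℝ)| ≤ znorm x := by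
  rw [znorm, ← Real.sqrt_sq_eq_abs]
  exact Real.sqrt_le_sqrt
    (single_le_sum (f := fun i => ((x i : ℝ)) ^ 2) (fun _ _ => sq_nonneg _) (mem_univ i))

lemma one_add_znorm_pos (x : Fin d → ℤ) : 0 < 1 + znorm x :=
  add_pos_of_pos_of_nonneg one_pos (znorm_nonneg x)

lemma one_add_znorm_rpow_pos (x : Fin d → ℤ) (a : ℝ) : 0 < 1 + znorm x ^ a :=
  add_pos_of_pos_of_nonneg one_pos (Real.rpow_nonneg (znorm_nonneg x) a)

lemma card_le_of_znorm_sub_le (a : Fin d → ℤ) (n : ℕ) {s : Finset (Fin d → ℤ)}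
    (hs : ∀ y ∈ s, znorm (a - y) ≤ n) : #s ≤ (2 * n + 1) ^ d := by
  calc #s ≤ #(Fintype.piFinset fun i => Icc (a i - n) (a i + n)) := by
        refine card_le_card fun y hy => Fintype.mem_piFinset.2 fun i => ?_
        have hi : |((a i - y i : ℤ) : ℝ)| ≤ (n : ℤ) := by
          simpa using (abs_le_znorm (a - y) i).trans (hs y hy)
        have := abs_le.1 (Int.cast_le.1 (Int.cast_abs (R := ℝ) ▸ hi))
        rw [mem_Icc]
        constructor <;> linarith [this.1, this.2]
    _ = (2 * n + 1) ^ d := by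
        have h2n : ∀ i, (a i + n + 1 - (a i - n)).toNat = 2 * n + 1 := fun i => by omega
        simp [Fintype.card_piFinset, Int.card_Icc, h2n]

noncomputable def shellIdx (u : Fin d → ℤ) : ℕ := Nat.log 2 ⌊znorm u⌋₊

lemma two_pow_shellIdx_le (u : Fin d → ℤ) : (2 : ℝ) ^ shellIdx u ≤ 1 + znorm u := by
  rcases eq_or_ne ⌊znorm u⌋₊ 0 with h | h
  · simp [shellIdx, h, znorm_nonneg]
  · calc (2 : ℝ) ^ shellIdx u ≤ ⌊znorm u⌋₊ := by exact_mod_cast Nat.pow_log_le_self 2 h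
      _ ≤ znorm u := Nat.floor_le (znorm_nonneg u)
      _ ≤ 1 + znorm u := le_add_of_nonneg_left zero_le_one

lemma znorm_lt_two_pow_shellIdx (u : Fin d → ℤ) : znorm u < 2 ^ (shellIdx u + 1) :=
  calc znorm u < ⌊znorm u⌋₊ + 1 := Nat.lt_floor_add_one _
    _ ≤ 2 ^ (shellIdx u + 1) := by exact_mod_cast Nat.lt_pow_succ_log_self one_lt_two _

lemma sum_rpow_neg_le_of_shellIdx_eq {e : ℝ} (he : 0 ≤ e) (a : Fin d → ℤ) (j : ℕ)
    {t : Finset (Fin d → ℤ)} (ht : ∀ y ∈ t, shellIdx (a - y) = j) :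
    ∑ y ∈ t, (1 + znorm (a - y)) ^ (-e) ≤ 8 ^ d * ((2 : ℝ) ^ ((d : ℝ) - e)) ^ j := by
  have hterm : ∀ y ∈ t, (1 + znorm (a - y)) ^ (-e) ≤ ((2 : ℝ) ^ j) ^ (-e) := fun y hy =>
    Real.rpow_le_rpow_of_nonpos (by positivity) (ht y hy ▸ two_pow_shellIdx_le _)
      (neg_nonpos.2 he)
  have hcard : (#t : ℝ) ≤ 8 ^ d * ((2 : ℝ) ^ j) ^ d := by
    have h := card_le_of_znorm_sub_le a (2 ^ (j + 1)) (s := t) fun y hy => by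
      have := znorm_lt_two_pow_shellIdx (a - y)
      rw [ht y hy] at this
      exact_mod_cast this.le
    calc (#t : ℝ) ≤ ((2 * 2 ^ (j + 1) + 1 : ℕ) : ℝ) ^ d := by exact_mod_cast h
      _ ≤ (8 * 2 ^ j) ^ d := by
          gcongr
          push_cast
          linarith [one_le_pow₀ (M₀ := ℝ) (n := j) one_le_two, pow_succ (2 : ℝ) j]
      _ = 8 ^ d * ((2 : ℝ) ^ j) ^ d := mul_pow _ _ _
  calc ∑ y ∈ t, (1 + znorm (a - y)) ^ (-e) ≤ #t * ((2 : ℝ) ^ j) ^ (-e) := by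
        simpa using sum_le_sum hterm
    _ ≤ 8 ^ d * ((2 : ℝ) ^ j) ^ d * ((2 : ℝ) ^ j) ^ (-e) := by gcongr
    _ = 8 ^ d * ((2 : ℝ) ^ ((d : ℝ) - e)) ^ j := by
        rw [mul_assoc, ← Real.rpow_natCast ((2 : ℝ) ^ j) d, ← Real.rpow_add (by positivity),
          Real.rpow_pow_comm zero_le_two, sub_eq_add_neg]

lemma sum_rpow_neg_le_sum_shells {e : ℝ} (he : 0 ≤ e) (a : Fin d → ℤ)
    (s : Finset (Fin d → ℤ)) :
    ∑ y ∈ s, (1 + znorm (a - y)) ^ (-e) ≤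
      8 ^ d * ∑ j ∈ s.image (fun y => shellIdx (a - y)), ((2 : ℝ) ^ ((d : ℝ) - e)) ^ j := by
  rw [← sum_fiberwise_of_maps_to fun y hy => mem_image_of_mem (fun y => shellIdx (a - y)) hy,
    mul_sum]
  exact sum_le_sum fun j _ =>
    sum_rpow_neg_le_of_shellIdx_eq he a j fun y hy => (mem_filter.1 hy).2


lemma exists_sum_rpow_neg_le_of_znorm_sub_le {A : ℝ} (hA : 0 ≤ A) (hAd : A < d) :
    ∃ C > 0, ∀ (a : Fin d → ℤ) (M : ℝ) (s : Finset (Fin d → ℤ)), 0 ≤ M →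
      (∀ y ∈ s, znorm (a - y) ≤ M) →
      ∑ y ∈ s, (1 + znorm (a - y)) ^ (-A) ≤ C * (1 + M) ^ ((d : ℝ) - A) := by
  set q : ℝ := 2 ^ ((d : ℝ) - A)
  have hq : 1 < q := Real.one_lt_rpow one_lt_two (by linarith)
  refine ⟨8 ^ d * (q / (q - 1)), by have := sub_pos.2 hq; positivity,
    fun a M s hM hs => ?_⟩
  have hshell : ∀ j ∈ s.image (fun y => shellIdx (a - y)),
      q ^ j ≤ (1 + M) ^ ((d : ℝ) - A) := by
    simp only [mem_image, forall_exists_index, and_imp]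
    rintro _ y hy rfl
    rw [Real.rpow_pow_comm zero_le_two]
    exact Real.rpow_le_rpow (by positivity)
      ((two_pow_shellIdx_le _).trans (by linarith [hs y hy])) (by linarith)
  calc ∑ y ∈ s, (1 + znorm (a - y)) ^ (-A)
      ≤ 8 ^ d * ∑ j ∈ s.image (fun y => shellIdx (a - y)), q ^ j :=
        sum_rpow_neg_le_sum_shells hA a s
    _ ≤ 8 ^ d * (q / (q - 1) * (1 + M) ^ ((d : ℝ) - A)) := by
        gcongr
        exact sum_pow_le_of_one_lt hq (by positivity) hshell
    _ = 8 ^ d * (q / (q - 1)) * (1 + M) ^ ((d : ℝ) - A) := by ring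

lemma exists_sum_rpow_neg_le_of_le_znorm_sub {p : ℝ} (hp : d < p) :
    ∃ C > 0, ∀ (a : Fin d → ℤ) (M : ℝ) (s : Finset (Fin d → ℤ)), 0 ≤ M →
      (∀ y ∈ s, M ≤ znorm (a - y)) →
      ∑ y ∈ s, (1 + znorm (a - y)) ^ (-p) ≤ C * (1 + M) ^ ((d : ℝ) - p) := by
  set r : ℝ := 2 ^ ((d : ℝ) - p)
  have hr0 : 0 ≤ r := by positivity
  have hr1 : r < 1 := Real.rpow_lt_one_of_one_lt_of_neg one_lt_two (by linarith)
  refine ⟨8 ^ d * (3 ^ (p - d) / (1 - r)), by have := sub_pos.2 hr1; positivity,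
    fun a M s hM hs => ?_⟩
  have hthird : ((1 + M) / 3) ^ ((d : ℝ) - p) = 3 ^ (p - d) * (1 + M) ^ ((d : ℝ) - p) := by
    rw [Real.div_rpow (by linarith) zero_le_three, div_eq_inv_mul, ← Real.rpow_neg zero_le_three,
      neg_sub]
  -- on shell `j`, `M ≤ ‖u‖ < 2 ^ (j + 1)` and `1 ≤ 2 ^ j`, hence `1 + M < 3 * 2 ^ j`
  have hshell : ∀ j ∈ s.image (fun y => shellIdx (a - y)),
      r ^ j ≤ ((1 + M) / 3) ^ ((d : ℝ) - p) := by
    simp only [mem_image, forall_exists_index, and_imp]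
    rintro _ y hy rfl
    have hlt := (hs y hy).trans_lt (znorm_lt_two_pow_shellIdx (a - y))
    have hone : (1 : ℝ) ≤ 2 ^ shellIdx (a - y) := one_le_pow₀ one_le_two
    rw [Real.rpow_pow_comm zero_le_two]
    exact Real.rpow_le_rpow_of_nonpos (by positivity) (by rw [pow_succ] at hlt; linarith)
      (by linarith)
  calc ∑ y ∈ s, (1 + znorm (a - y)) ^ (-p)
      ≤ 8 ^ d * ∑ j ∈ s.image (fun y => shellIdx (a - y)), r ^ j :=
        sum_rpow_neg_le_sum_shells (by linarith [d.cast_nonneg (α := ℝ)]) a s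
    _ ≤ 8 ^ d * (((1 + M) / 3) ^ ((d : ℝ) - p) / (1 - r)) := by
        gcongr
        exact sum_pow_le_of_lt_one hr0 hr1 (by positivity) hshell
    _ = 8 ^ d * (3 ^ (p - d) / (1 - r)) * (1 + M) ^ ((d : ℝ) - p) := by
        rw [hthird]; ring

variable {A B : ℝ}

lemma exists_sum_rpow_neg_mul_le_of_closer (hA : 0 ≤ A) (hAd : A < d) (hB : 0 ≤ B)
    (hABd : d < A + B) :
    ∃ C > 0, ∀ (a b : Fin d → ℤ) (s : Finset (Fin d → ℤ)),
      (∀ y ∈ s, znorm (a - y) ≤ znorm (b - y)) →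
      ∑ y ∈ s, (1 + znorm (a - y)) ^ (-A) * (1 + znorm (b - y)) ^ (-B) ≤
        C * (1 + znorm (a - b) / 2) ^ ((d : ℝ) - A - B) := by
  obtain ⟨C₁, hC₁, hball⟩ := exists_sum_rpow_neg_le_of_znorm_sub_le hA hAd
  obtain ⟨C₂, hC₂, htail⟩ := exists_sum_rpow_neg_le_of_le_znorm_sub hABd
  refine ⟨C₁ + C₂, by positivity, fun a b s hs => ?_⟩
  set R := znorm (a - b) / 2 with hR_def
  have hR : 0 ≤ R := div_nonneg (znorm_nonneg _) zero_le_two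
  have hRb : ∀ y ∈ s, R ≤ znorm (b - y) := fun y hy => by
    linarith [znorm_sub_le a b y, hs y hy]
  have hnear : ∑ y ∈ s with znorm (a - y) ≤ R,
      (1 + znorm (a - y)) ^ (-A) * (1 + znorm (b - y)) ^ (-B) ≤
        C₁ * (1 + R) ^ ((d : ℝ) - A - B) :=
    calc _ ≤ ∑ y ∈ s with znorm (a - y) ≤ R,
          (1 + znorm (a - y)) ^ (-A) * (1 + R) ^ (-B) := by
          refine sum_le_sum fun y hy => mul_le_mul_of_nonneg_left ?_
            (Real.rpow_nonneg (one_add_znorm_pos _).le _)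
          exact Real.rpow_le_rpow_of_nonpos (by positivity)
            (by linarith [hRb y (mem_filter.1 hy).1]) (neg_nonpos.2 hB)
      _ ≤ C₁ * (1 + R) ^ ((d : ℝ) - A) * (1 + R) ^ (-B) := by
          rw [← sum_mul]
          gcongr
          exact hball a R _ hR fun y hy => (mem_filter.1 hy).2
      _ = C₁ * (1 + R) ^ ((d : ℝ) - A - B) := by
          rw [mul_assoc, ← Real.rpow_add (by positivity), ← sub_eq_add_neg]
  have hfar : ∑ y ∈ s with ¬znorm (a - y) ≤ R,
      (1 + znorm (a - y)) ^ (-A) * (1 + znorm (b - y)) ^ (-B) ≤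
        C₂ * (1 + R) ^ ((d : ℝ) - A - B) :=
    calc _ ≤ ∑ y ∈ s with ¬znorm (a - y) ≤ R, (1 + znorm (a - y)) ^ (-(A + B)) := by
          refine sum_le_sum fun y hy => ?_
          rw [neg_add, Real.rpow_add (one_add_znorm_pos _)]
          refine mul_le_mul_of_nonneg_left ?_ (Real.rpow_nonneg (one_add_znorm_pos _).le _)
          exact Real.rpow_le_rpow_of_nonpos (one_add_znorm_pos _)
            (by linarith [hs y (mem_filter.1 hy).1]) (neg_nonpos.2 hB)
      _ ≤ C₂ * (1 + R) ^ ((d : ℝ) - (A + B)) :=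
          htail a R _ hR fun y hy => (not_le.1 (mem_filter.1 hy).2).le
      _ = C₂ * (1 + R) ^ ((d : ℝ) - A - B) := by rw [sub_add_eq_sub_sub]
  rw [← sum_filter_add_sum_filter_not s (fun y => znorm (a - y) ≤ R), add_mul]
  exact add_le_add hnear hfar

lemma exists_sum_rpow_neg_mul_le (hA : 0 ≤ A) (hAd : A < d) (hB : 0 ≤ B) (hBd : B < d)
    (hABd : d < A + B) :
    ∃ C > 0, ∀ (a b : Fin d → ℤ) (s : Finset (Fin d → ℤ)),
      ∑ y ∈ s, (1 + znorm (a - y)) ^ (-A) * (1 + znorm (b - y)) ^ (-B) ≤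
        C * (1 + znorm (a - b)) ^ ((d : ℝ) - A - B) := by
  obtain ⟨C₁, hC₁, hcloser_a⟩ := exists_sum_rpow_neg_mul_le_of_closer hA hAd hB hABd
  obtain ⟨C₂, hC₂, hcloser_b⟩ :=
    exists_sum_rpow_neg_mul_le_of_closer hB hBd hA (by linarith)
  refine ⟨(C₁ + C₂) * 2 ^ (A + B - d), by positivity, fun a b s => ?_⟩
  have hba : (d : ℝ) - B - A = d - A - B := by ring
  rw [← sum_filter_add_sum_filter_not s (fun y => znorm (a - y) ≤ znorm (b - y))]
  calc _ ≤ C₁ * (1 + znorm (a - b) / 2) ^ ((d : ℝ) - A - B) +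
        C₂ * (1 + znorm (a - b) / 2) ^ ((d : ℝ) - A - B) := by
        gcongr
        · exact hcloser_a a b _ fun y hy => (mem_filter.1 hy).2
        · simp_rw [mul_comm ((1 + znorm (a - _)) ^ (-A)), znorm_sub_comm a b, ← hba]
          exact hcloser_b b a _ fun y hy => (not_le.1 (mem_filter.1 hy).2).le
    _ ≤ (C₁ + C₂) * (2 ^ (A + B - d) * (1 + znorm (a - b)) ^ ((d : ℝ) - A - B)) := by
        rw [← add_mul]
        gcongr
        have h := one_add_div_two_rpow_le (c := (d : ℝ) - A - B) (by linarith)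
          (znorm_nonneg (a - b))
        rwa [show -((d : ℝ) - A - B) = A + B - d by ring] at h
    _ = _ := by ring

lemma exists_tsum_one_div_mul_le (hA : 0 ≤ A) (hAd : A < d) (hB : 0 ≤ B) (hBd : B < d)
    (hABd : d < A + B) :
    ∃ C > 0, ∀ a b : Fin d → ℤ,
      ∑' y, 1 / (1 + znorm (a - y) ^ A) * (1 / (1 + znorm (y - b) ^ B)) ≤
        C * (1 / (1 + znorm (a - b) ^ (A + B - d))) := by
  obtain ⟨C, hC, hsum⟩ := exists_sum_rpow_neg_mul_le hA hAd hB hBd hABd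
  refine ⟨2 ^ A * 2 ^ B * C * 2, by positivity, fun a b => ?_⟩
  have := znorm_nonneg (a - b)
  refine tsum_le_of_sum_le' (by positivity) fun s => ?_
  calc _ ≤ ∑ y ∈ s,
        2 ^ A * (1 + znorm (a - y)) ^ (-A) * (2 ^ B * (1 + znorm (b - y)) ^ (-B)) := by
        refine sum_le_sum fun y _ => ?_
        rw [znorm_sub_comm y b]
        exact mul_le_mul (one_div_one_add_rpow_le hA (znorm_nonneg _))
          (one_div_one_add_rpow_le hB (znorm_nonneg _))
          (one_div_nonneg.2 (one_add_znorm_rpow_pos _ _).le)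
          (mul_nonneg (by positivity) (Real.rpow_nonneg (one_add_znorm_pos _).le _))
    _ ≤ 2 ^ A * 2 ^ B * (C * (1 + znorm (a - b)) ^ (-(A + B - d))) := by
        simp_rw [mul_mul_mul_comm _ _ (2 ^ B : ℝ), ← mul_sum, neg_sub, ← sub_sub]
        gcongr
        exact hsum a b s
    _ = 2 ^ A * 2 ^ B * C * (1 + znorm (a - b)) ^ (-(A + B - d)) := by ring
    _ ≤ 2 ^ A * 2 ^ B * C * (2 / (1 + znorm (a - b) ^ (A + B - d))) :=
        mul_le_mul_of_nonneg_left
          (rpow_neg_le_two_div_one_add_rpow (by linarith) (znorm_nonneg _)) (by positivity)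
    _ = 2 ^ A * 2 ^ B * C * 2 * (1 / (1 + znorm (a - b) ^ (A + B - d))) := by ring

end LatticeSums

section EdgesWeight

variable {V : Type*} {d : ℕ}

lemma edgesWeight_nonneg (E : Finset (V × V)) (α : V × V → ℝ) (ψ : V → Fin d → ℤ) :
    0 ≤ edgesWeight E α ψ :=
  prod_nonneg fun _ _ => one_div_nonneg.2 (one_add_znorm_rpow_pos _ _).le

variable [DecidableEq V]

lemma edgesWeight_update_of_forall_ne {E : Finset (V × V)} {v : V}
    (hE : ∀ e ∈ E, e.1 ≠ v ∧ e.2 ≠ v) (α : V × V → ℝ) (ψ : V → Fin d → ℤ)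
    (y : Fin d → ℤ) :
    edgesWeight E α (Function.update ψ v y) = edgesWeight E α ψ :=
  prod_congr rfl fun e he => by
    rw [Function.update_of_ne (hE e he).1, Function.update_of_ne (hE e he).2]

lemma edgesWeight_eq_mul_mul_erase_erase {E : Finset (V × V)} {e₁ e₂ : V × V}
    (h₁ : e₁ ∈ E) (h₂ : e₂ ∈ E) (hne : e₁ ≠ e₂) (α : V × V → ℝ) (ψ : V → Fin d → ℤ) :
    edgesWeight E α ψ = 1 / (1 + znorm (ψ e₁.1 - ψ e₁.2) ^ α e₁) *
      (1 / (1 + znorm (ψ e₂.1 - ψ e₂.2) ^ α e₂)) *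
        edgesWeight ((E.erase e₁).erase e₂) α ψ := by
  rw [edgesWeight, edgesWeight, ← mul_prod_erase E _ h₁, ← mul_prod_erase (E.erase e₁) _
    (mem_erase.2 ⟨hne.symm, h₂⟩), mul_assoc]

lemma mul_edgesWeight_le_edgesWeight_insert (E : Finset (V × V)) (e : V × V) (α : V × V → ℝ)
    (a : ℝ) (ψ : V → Fin d → ℤ) :
    1 / (1 + znorm (ψ e.1 - ψ e.2) ^ a) * edgesWeight E α ψ ≤
      edgesWeight (insert e E) (Function.update α e a) ψ := by
  have hrest : edgesWeight E α ψ ≤ edgesWeight (E.erase e) α ψ := by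
    by_cases he : e ∈ E
    · rw [edgesWeight, ← mul_prod_erase E _ he]
      exact mul_le_of_le_one_left (edgesWeight_nonneg _ α ψ)
        (div_le_one_of_le₀ (le_add_of_nonneg_right (Real.rpow_nonneg (znorm_nonneg _) _))
          (one_add_znorm_rpow_pos _ _).le)
    · rw [erase_eq_of_notMem he]
  have hupdate :
      edgesWeight (E.erase e) (Function.update α e a) ψ = edgesWeight (E.erase e) α ψ :=
    prod_congr rfl fun f hf => by rw [Function.update_of_ne (ne_of_mem_erase hf)]
  rw [edgesWeight.eq_1 (insert e E), ← mul_prod_erase _ _ (mem_insert_self e E),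
    erase_insert_eq_erase, Function.update_self]
  exact mul_le_mul_of_nonneg_left (hrest.trans_eq hupdate.symm)
    (one_div_nonneg.2 (one_add_znorm_rpow_pos _ _).le)

end EdgesWeight

section Orientation

variable {V : Type*} {G : SimpleGraph V} {E : Finset (V × V)}

lemma injOn_sym2_of_card_eq [Fintype G.edgeSet] (hEadj : ∀ e ∈ E, G.Adj e.1 e.2)
    (hEcover : ∀ u v, G.Adj u v → (u, v) ∈ E ∨ (v, u) ∈ E) (hEcard : #E = #G.edgeFinset) :
    Set.InjOn (fun e : V × V => s(e.1, e.2)) E := by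
  classical
  have himage : E.image (fun e : V × V => s(e.1, e.2)) = G.edgeFinset := by
    ext e
    induction e using Sym2.ind with
    | h u v =>
      simp only [mem_image, SimpleGraph.mem_edgeFinset]
      constructor
      · rintro ⟨f, hf, hfe⟩
        exact hfe ▸ hEadj f hf
      · intro h
        rcases hEcover u v h with h' | h'
        · exact ⟨_, h', rfl⟩
        · exact ⟨_, h', Sym2.eq_swap⟩
  exact injOn_of_card_image_eq (by rw [himage, hEcard])

lemma fst_ne_and_snd_ne_of_mem_erase_erase [Fintype V] [DecidableEq V] [DecidableRel G.Adj]
    (hEadj : ∀ e ∈ E, G.Adj e.1 e.2) (hinj : Set.InjOn (fun e : V × V => s(e.1, e.2)) E)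
    {x v z : V} (hv : G.degree v = 2) (hxv : (x, v) ∈ E) (hvz : (v, z) ∈ E) :
    ∀ e ∈ (E.erase (x, v)).erase (v, z), e.1 ≠ v ∧ e.2 ≠ v := by
  have hxz : x ≠ z := by
    rintro rfl
    exact G.ne_of_adj (hEadj _ hxv) (congrArg Prod.fst (hinj hxv hvz Sym2.eq_swap))
  have hinc : G.incidenceFinset v = {s(x, v), s(v, z)} := by
    refine (eq_of_subset_of_card_le ?_ ?_).symm
    · intro e he
      rw [mem_insert, mem_singleton] at he
      rcases he with rfl | rfl
      · simpa [SimpleGraph.mk'_mem_incidenceSet_iff] using hEadj _ hxv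
      · simpa [SimpleGraph.mk'_mem_incidenceSet_iff] using hEadj _ hvz
    · rw [SimpleGraph.card_incidenceFinset_eq_degree, hv,
        card_pair (by simp [hxz, G.ne_of_adj (hEadj _ hxv)])]
  intro e he
  obtain ⟨hez, hex, heE⟩ : e ≠ (v, z) ∧ e ≠ (x, v) ∧ e ∈ E := by simpa using he
  rw [← not_or]
  intro hve
  have hmem : s(e.1, e.2) ∈ G.incidenceFinset v := by
    obtain ⟨a, b⟩ := e
    rw [SimpleGraph.mem_incidenceFinset, SimpleGraph.mk'_mem_incidenceSet_iff]
    exact ⟨hEadj _ heE, hve.imp Eq.symm Eq.symm⟩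
  rw [hinc, mem_insert, mem_singleton] at hmem
  rcases hmem with h | h
  · exact hex (hinj heE hxv h)
  · exact hez (hinj heE hvz h)

end Orientation

theorem stmt10_general {V : Type*} [Fintype V] [DecidableEq V] {d : ℕ}
    (G : SimpleGraph V) [DecidableRel G.Adj]
    (E : Finset (V × V)) (hEadj : ∀ e ∈ E, G.Adj e.1 e.2)
    (hEcover : ∀ u v : V, G.Adj u v → (u, v) ∈ E ∨ (v, u) ∈ E)
    (hEcard : E.card = G.edgeFinset.card)
    (xv pv zv : V)
    (hdegp : G.degree pv = 2)
    (hmem1 : (xv, pv) ∈ E) (hmem2 : (pv, zv) ∈ E)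
    (α : V × V → ℝ)
    (h1 : 0 < α (xv, pv)) (h2 : α (xv, pv) < d)
    (h3 : 0 < α (pv, zv)) (h4 : α (pv, zv) < d)
    (h5 : (d : ℝ) < α (xv, pv) + α (pv, zv)) :
    ∃ C : ℝ, 0 < C ∧ ∀ φ : V → (Fin d → ℤ),
      (∑' yy : Fin d → ℤ, edgesWeight E α (Function.update φ pv yy)) ≤
        C * edgesWeight (insert (xv, zv) ((E.erase (xv, pv)).erase (pv, zv)))
              (Function.update α (xv, zv) (α (xv, pv) + α (pv, zv) - d)) φ := by
  obtain ⟨C, hC, hmerge⟩ := exists_tsum_one_div_mul_le h1.le h2 h3.le h4 h5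
  refine ⟨C, hC, fun φ => ?_⟩
  have hxp : xv ≠ pv := G.ne_of_adj (hEadj _ hmem1)
  have hpz : pv ≠ zv := G.ne_of_adj (hEadj _ hmem2)
  have hoff := fst_ne_and_snd_ne_of_mem_erase_erase hEadj
    (injOn_sym2_of_card_eq hEadj hEcover hEcard) hdegp hmem1 hmem2
  set E' := (E.erase (xv, pv)).erase (pv, zv)
  have hsplit : ∀ y, edgesWeight E α (Function.update φ pv y) =
      1 / (1 + znorm (φ xv - y) ^ α (xv, pv)) * (1 / (1 + znorm (y - φ zv) ^ α (pv, zv))) *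
        edgesWeight E' α φ := fun y => by
    rw [edgesWeight_eq_mul_mul_erase_erase hmem1 hmem2 (by simp [hxp]),
      edgesWeight_update_of_forall_ne hoff]
    simp [hxp, hpz.symm]
  calc ∑' y, edgesWeight E α (Function.update φ pv y)
      = (∑' y, 1 / (1 + znorm (φ xv - y) ^ α (xv, pv)) *
          (1 / (1 + znorm (y - φ zv) ^ α (pv, zv)))) * edgesWeight E' α φ := by
        simp_rw [hsplit]
        exact tsum_mul_right
    _ ≤ C * (1 / (1 + znorm (φ xv - φ zv) ^ (α (xv, pv) + α (pv, zv) - d))) *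
          edgesWeight E' α φ :=
        mul_le_mul_of_nonneg_right (hmerge _ _) (edgesWeight_nonneg _ _ _)
    _ ≤ _ := by
        rw [mul_assoc]
        exact mul_le_mul_of_nonneg_left
          (mul_edgesWeight_le_edgesWeight_insert E' (xv, zv) α _ φ) hC.le

/-- The merge operation (Lemma 4.8): summing over the label of a degree-2
vertex `pv` adjacent to a leaf `xv` and to `zv` merges the two edges into a
single edge of weight `α(xv,pv)+α(pv,zv)-d`, up to a constant. -/
theorem stmt10 {V : Type*} [Fintype V] [DecidableEq V] {d : ℕ} (hd : 0 < d)
    (G : SimpleGraph V) [DecidableRel G.Adj] (hG : G.IsTree)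
    (E : Finset (V × V)) (hEadj : ∀ e ∈ E, G.Adj e.1 e.2)
    (hEcover : ∀ u v : V, G.Adj u v → (u, v) ∈ E ∨ (v, u) ∈ E)
    (hEcard : E.card = G.edgeFinset.card)
    (xv pv zv : V) (hxz : xv ≠ zv)
    (hdegx : G.degree xv = 1) (hdegp : G.degree pv = 2)
    (hadj1 : G.Adj xv pv) (hadj2 : G.Adj pv zv)
    (hmem1 : (xv, pv) ∈ E) (hmem2 : (pv, zv) ∈ E)
    (α : V × V → ℝ)
    (h1 : 0 < α (xv, pv)) (h2 : α (xv, pv) < d)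
    (h3 : 0 < α (pv, zv)) (h4 : α (pv, zv) < d)
    (h5 : (d : ℝ) < α (xv, pv) + α (pv, zv)) :
    ∃ C : ℝ, 0 < C ∧ ∀ φ : V → (Fin d → ℤ),
      (∑' yy : Fin d → ℤ, edgesWeight E α (Function.update φ pv yy)) ≤
        C * edgesWeight (insert (xv, zv) ((E.erase (xv, pv)).erase (pv, zv)))
              (Function.update α (xv, zv) (α (xv, pv) + α (pv, zv) - d)) φ :=
  stmt10_general G E hEadj hEcover hEcard xv pv zv hdegp hmem1 hmem2 α h1 h2 h3 h4 h5
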